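/- arXiv:2408.06132 — 2 statements merged into one kernel-verified Lean document; each statement's English description precedes it below -/
import Mathlib

section
/- Let P be a finite partially ordered set with a greatest element ⊤, let Λ be a finite set equipped with a map π : Λ → P, and let w be a function assigning an integer to every pair (τ, λ) consisting of a chain τ ⊆ P with ⊤ ∈ τ and an element λ ∈ Λ. Then Σ_σ (−1)^{card σ} Σ_{λ ∈ Λ, π(λ) ≤ min σ} w(σ ∪ {π(λ)}, λ) = Σ_{λ ∈ Λ, π(λ) < ⊤} w({π(λ), ⊤}, λ), where the outer sum on the left ranges over all chains σ ⊆ P whose greatest element is ⊤ and which have at least two elements, and min σ denotes the least element of σ. -/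
/-!
Swap the two sums, so that for each `l` with `p = π l` one sums `(-1) ^ card σ * w (σ ∪ {p}) l`
over the chains `σ ∋ ⊤` with at least two elements lying above `p`. Toggling `p` in `σ` is a
sign-reversing involution on these chains that preserves `σ ∪ {p}`; it is defined everywhere
except at `σ = {p, ⊤}` (whose toggle `{⊤}` is too small), so only that chain survives, and
only when `p < ⊤`.
-/

open Finset

theorem Finset.sum_neg_one_pow_card_mul_insert_eq_zero {α R : Type*} [DecidableEq α] [Ring R]
    {s : Finset (Finset α)} {a : α} (f : Finset α → R)
    (h_erase : ∀ σ ∈ s, a ∈ σ → σ.erase a ∈ s)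
    (h_insert : ∀ σ ∈ s, a ∉ σ → insert a σ ∈ s) :
    ∑ σ ∈ s, (-1 : R) ^ σ.card * f (insert a σ) = 0 := by
  refine sum_involution (fun σ _ => if a ∈ σ then σ.erase a else insert a σ) ?_ ?_ ?_ ?_
  · intro σ _
    by_cases ha : a ∈ σ
    · obtain ⟨n, hn⟩ : ∃ n, σ.card = n + 1 := ⟨_, (card_erase_add_one ha).symm⟩
      simp [ha, hn, card_erase_of_mem, pow_succ]
    · simp [ha, card_insert_of_notMem, pow_succ]
  · intro σ _ _
    split_ifs with ha
    · exact (ne_of_mem_of_not_mem' ha (notMem_erase a σ)).symm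
    · exact ne_of_mem_of_not_mem' (mem_insert_self a σ) ha
  · intro σ hσ
    split_ifs with ha
    · exact h_erase σ hσ ha
    · exact h_insert σ hσ ha
  · intro σ _
    by_cases ha : a ∈ σ <;> simp [ha, insert_erase]

section ChainsFrom

variable {P : Type*} [PartialOrder P] [OrderTop P] [Fintype P] [DecidableEq P]

open scoped Classical in
noncomputable def chainsFrom (p : P) : Finset (Finset P) :=
  univ.filter fun σ =>
    IsChain (· ≤ ·) (σ : Set P) ∧ ⊤ ∈ σ ∧ 2 ≤ σ.card ∧ ∀ x ∈ σ, p ≤ x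

theorem mem_chainsFrom {p : P} {σ : Finset P} :
    σ ∈ chainsFrom p ↔
      IsChain (· ≤ ·) (σ : Set P) ∧ ⊤ ∈ σ ∧ 2 ≤ σ.card ∧ ∀ x ∈ σ, p ≤ x := by
  simp [chainsFrom]

theorem chainsFrom_top : chainsFrom (⊤ : P) = ∅ := by
  refine eq_empty_of_forall_notMem fun σ hσ => ?_
  obtain ⟨-, -, hcard, hle⟩ := mem_chainsFrom.1 hσ
  have : σ ⊆ {⊤} := fun x hx => mem_singleton.2 (top_le_iff.1 (hle x hx))
  have := card_le_card this
  simp at this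
  omega

theorem pair_top_mem_chainsFrom {p : P} (hp : p < ⊤) : {p, ⊤} ∈ chainsFrom p := by
  refine mem_chainsFrom.2 ⟨?_, by simp, by simp [card_pair hp.ne], by simp [hp.le]⟩
  rw [coe_pair]
  exact IsChain.pair le_top

theorem insert_mem_chainsFrom {p : P} {σ : Finset P} (hσ : σ ∈ chainsFrom p) :
    insert p σ ∈ chainsFrom p := by
  obtain ⟨hchain, htop, hcard, hle⟩ := mem_chainsFrom.1 hσ
  refine mem_chainsFrom.2 ⟨?_, mem_insert_of_mem htop,
    hcard.trans (card_le_card (subset_insert _ _)), ?_⟩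
  · rw [coe_insert]
    exact hchain.insert fun x hx _ => .inl (hle x hx)
  · simpa using hle

theorem erase_mem_chainsFrom {p : P} {σ : Finset P} (hp : p < ⊤) (hσ : σ ∈ chainsFrom p)
    (hcard : 3 ≤ σ.card) : σ.erase p ∈ chainsFrom p := by
  obtain ⟨hchain, htop, -, hle⟩ := mem_chainsFrom.1 hσ
  refine mem_chainsFrom.2 ⟨hchain.mono (by simp), mem_erase.2 ⟨hp.ne', htop⟩, ?_,
    fun x hx => hle x (mem_of_mem_erase hx)⟩
  have := pred_card_le_card_erase (s := σ) (a := p)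
  omega

theorem sum_chainsFrom_of_lt_top {R : Type*} [Ring R] {p : P} (hp : p < ⊤)
    (f : Finset P → R) :
    ∑ σ ∈ chainsFrom p, (-1 : R) ^ σ.card * f (insert p σ) = f {p, ⊤} := by
  rw [← add_sum_erase _ _ (pair_top_mem_chainsFrom hp),
    sum_neg_one_pow_card_mul_insert_eq_zero]
  · simp [card_pair hp.ne]
  · intro σ hσ hpσ
    obtain ⟨hne, hσ⟩ := mem_erase.1 hσ
    have hpair : {p, ⊤} ⊂ σ := ssubset_of_subset_of_ne
      (insert_subset hpσ (singleton_subset_iff.2 (mem_chainsFrom.1 hσ).2.1)) (Ne.symm hne)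
    have hcard := card_lt_card hpair
    rw [card_pair hp.ne] at hcard
    refine mem_erase.2 ⟨?_, erase_mem_chainsFrom hp hσ hcard⟩
    exact (ne_of_mem_of_not_mem' (mem_insert_self p {⊤}) (notMem_erase p σ)).symm
  · intro σ hσ hpσ
    obtain ⟨-, hσ⟩ := mem_erase.1 hσ
    refine mem_erase.2 ⟨fun h => ?_, insert_mem_chainsFrom hσ⟩
    have := congrArg card h
    rw [card_insert_of_notMem hpσ, card_pair hp.ne] at this
    have := (mem_chainsFrom.1 hσ).2.2.1
    omega

open scoped Classical in
theorem sum_chainsFrom {R : Type*} [Ring R] (p : P) (f : Finset P → R) :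
    ∑ σ ∈ chainsFrom p, (-1 : R) ^ σ.card * f (insert p σ) =
      if p < ⊤ then f {p, ⊤} else 0 := by
  split_ifs with hp
  · exact sum_chainsFrom_of_lt_top hp f
  · rw [not_lt_top_iff.1 hp, chainsFrom_top, sum_empty]

end ChainsFrom

open Finset in
open scoped Classical in
/-- The combinatorial cancellation identity underlying Theorem D:
for a finite poset `P` with greatest element `⊤`, a finite set `Λ` with a map
`π : Λ → P`, and a weight `w` on pairs (chain containing `⊤`, element of `Λ`),
the alternating sum over chains `σ` with greatest element `⊤` and at least two
elements of the inner sums over `l` with `π l ≤ min σ` of `w (σ ∪ {π l}) l`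
equals the sum over `l` with `π l < ⊤` of `w {π l, ⊤} l`. -/
theorem alternating_sum_chains {P : Type*} [PartialOrder P] [OrderTop P] [Fintype P]
    [DecidableEq P] {Λ : Type*} [Fintype Λ] (π : Λ → P) (w : Finset P → Λ → ℤ) :
    (∑ σ ∈ univ.filter (fun σ : Finset P =>
        IsChain (· ≤ ·) (σ : Set P) ∧ ⊤ ∈ σ ∧ 2 ≤ σ.card),
      (-1 : ℤ) ^ σ.card *
        ∑ l ∈ univ.filter (fun l : Λ => ∀ x ∈ σ, π l ≤ x), w (insert (π l) σ) l)
    = ∑ l ∈ univ.filter (fun l : Λ => π l < ⊤), w ({π l, ⊤} : Finset P) l := by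
  simp_rw [mul_sum]
  rw [sum_comm' (t' := univ) (s' := fun l => chainsFrom (π l))
      (by simp [mem_chainsFrom, and_assoc]),
    sum_filter]
  exact sum_congr rfl fun l _ => sum_chainsFrom (π l) (w · l)
end

section
/- Let G be a group acting on partially ordered sets P and Q by order-preserving bijections, let f₀ : P → Q be G-equivariant and order-reversing, and let F : T_G(P)^op → T_G(Q) be the induced functor (F(x) = f₀(x) on objects, and F sends the morphism x → x' of T_G(P)^op given by g ∈ G with g•x' ≤ x to the morphism f₀(x) → f₀(x') given by g⁻¹). Fix y ∈ Q and suppose there exists z ∈ P with f₀(z) = y such that for all x ∈ P and g ∈ G with g•f₀(x) ≤ y one has g⁻¹•z ≤ x. Then the comma category F/y is a filtered category; moreover, any two parallel morphisms in F/y are equal. -/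
open CategoryTheory

/-- The transporter category of a `G`-action on a poset `P` (by order-preserving
bijections): objects are elements of `P`, morphisms `x ⟶ y` are group elements
`g` with `g • x ≤ y`, and composition of `g : x ⟶ y` and `h : y ⟶ z` is
`h * g : x ⟶ z`. -/
structure Transporter (G : Type*) (P : Type*) where
  pt : P

variable {G : Type*} [Group G]

instance Transporter.category {P : Type*} [PartialOrder P] [MulAction G P]
    [CovariantClass G P (· • ·) (· ≤ ·)] : Category (Transporter G P) where
  Hom x y := {g : G // g • x.pt ≤ y.pt}
  id x := ⟨1, le_of_eq (one_smul G x.pt)⟩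
  comp {x y z} f g := ⟨g.1 * f.1, by
    rw [mul_smul]
    exact le_trans (CovariantClass.elim g.1 f.2) g.2⟩
  id_comp f := Subtype.ext (mul_one _)
  comp_id f := Subtype.ext (one_mul _)
  assoc f g h := Subtype.ext (mul_assoc _ _ _).symm

variable {P : Type*} [PartialOrder P] [MulAction G P] [CovariantClass G P (· • ·) (· ≤ ·)]
  {Q : Type*} [PartialOrder Q] [MulAction G Q] [CovariantClass G Q (· • ·) (· ≤ ·)]

/-- The functor `T_G(P)ᵒᵖ ⥤ T_G(Q)` induced by a `G`-equivariant
order-reversing map `f₀ : P → Q`: on objects `x ↦ f₀ x`, and the morphism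
`x → x'` of `T_G(P)ᵒᵖ` given by `g ∈ G` with `g • x' ≤ x` is sent to the
morphism `f₀ x → f₀ x'` given by `g⁻¹`. -/
def transporterFunctor (f₀ : P → Q) (hequiv : ∀ (g : G) (x : P), f₀ (g • x) = g • f₀ x)
    (hrev : ∀ x x' : P, x ≤ x' → f₀ x' ≤ f₀ x) :
    (Transporter G P)ᵒᵖ ⥤ Transporter G Q where
  obj x := ⟨f₀ x.unop.pt⟩
  map {x x'} φ := ⟨(φ.unop.1)⁻¹, by
    have h1 : f₀ x.unop.pt ≤ f₀ (φ.unop.1 • x'.unop.pt) := hrev _ _ φ.unop.2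
    rw [hequiv] at h1
    calc (φ.unop.1)⁻¹ • f₀ x.unop.pt
        ≤ (φ.unop.1)⁻¹ • (φ.unop.1 • f₀ x'.unop.pt) := CovariantClass.elim _ h1
      _ = f₀ x'.unop.pt := inv_smul_smul _ _⟩
  map_id x := Subtype.ext inv_one
  map_comp {x y z} φ ψ := Subtype.ext (mul_inv_rev _ _)

/-- If `y ∈ Q` admits `z ∈ P` with `f₀ z = y` such that `g • f₀ x ≤ y` implies
`g⁻¹ • z ≤ x`, then the comma category `F/y` of the induced functor
`F : T_G(P)ᵒᵖ ⥤ T_G(Q)` is filtered; moreover any two parallel morphisms in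
`F/y` are equal. -/
theorem transporter_comma_filtered (f₀ : P → Q)
    (hequiv : ∀ (g : G) (x : P), f₀ (g • x) = g • f₀ x)
    (hrev : ∀ x x' : P, x ≤ x' → f₀ x' ≤ f₀ x)
    (y : Transporter G Q) (z : P) (hz : f₀ z = y.pt)
    (hmin : ∀ (x : P) (g : G), g • f₀ x ≤ y.pt → g⁻¹ • z ≤ x) :
    IsFiltered (CostructuredArrow (transporterFunctor f₀ hequiv hrev) y) ∧
    ∀ (a b : CostructuredArrow (transporterFunctor f₀ hequiv hrev) y)
      (u v : a ⟶ b), u = v := by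
  set F := transporterFunctor f₀ hequiv hrev with hF
  -- Key: any two parallel morphisms are equal.
  have heq : ∀ (a b : CostructuredArrow F y) (u v : a ⟶ b), u = v := by
    intro a b u v
    have key : ∀ (w : a ⟶ b), w.left.unop.1 = a.hom.1⁻¹ * b.hom.1 := by
      intro w
      have hw := CostructuredArrow.w w
      have h1 : b.hom.1 * (w.left.unop.1)⁻¹ = a.hom.1 := congrArg Subtype.val hw
      have : w.left.unop.1⁻¹ = b.hom.1⁻¹ * a.hom.1 := by
        rw [← h1]; group
      calc w.left.unop.1 = (w.left.unop.1⁻¹)⁻¹ := by group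
        _ = a.hom.1⁻¹ * b.hom.1 := by rw [this]; group
    apply CostructuredArrow.hom_ext
    apply Quiver.Hom.unop_inj
    exact Subtype.ext ((key u).trans (key v).symm)
  -- The terminal-ish object: z with identity structure map.
  have hc1 : (1 : G) • f₀ z ≤ y.pt := by rw [one_smul, hz]
  let c : CostructuredArrow F y :=
    CostructuredArrow.mk (Y := Opposite.op (⟨z⟩ : Transporter G P))
      (⟨1, hc1⟩ : F.obj (Opposite.op ⟨z⟩) ⟶ y)
  have toC : ∀ a : CostructuredArrow F y, a ⟶ c := by
    intro a
    have hle : a.hom.1⁻¹ • z ≤ a.left.unop.pt := hmin _ _ a.hom.2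
    refine CostructuredArrow.homMk
      ((show (⟨z⟩ : Transporter G P) ⟶ a.left.unop from ⟨a.hom.1⁻¹, hle⟩).op) ?_
    apply Subtype.ext
    show (1 : G) * (a.hom.1⁻¹)⁻¹ = a.hom.1
    group
  refine ⟨?_, heq⟩
  have : IsFilteredOrEmpty (CostructuredArrow F y) := by
    constructor
    · intro a b; exact ⟨c, toC a, toC b, trivial⟩
    · intro a b u v; exact ⟨c, toC b, by rw [heq a b u v]⟩
  exact { nonempty := ⟨c⟩ }
end
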